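/- Let f : ℤ₂³ → ℤ be the indicator function of the set {001, 010, 100} (the connection set of the 3-dimensional hypercube Q₃), and let A u v = f(u + v) be the adjacency matrix of Cay(ℤ₂³, f). Then perfect state transfer occurs at time π/2 between every pair of antipodal vertices: for all u, v ∈ ℤ₂³ with u + v = 111, the (v,u) entry of exp(-(i π/2)·A) has absolute value 1. -/

import Mathlib

/-!
The adjacency matrix of a cubelike graph `Cay(ℤ₂ⁿ, S)` is the sum of the translation matrices
`T s`, `s ∈ S`, which commute and are involutions. For an involution `X` one has
`exp (c • X) = cosh c • 1 + sinh c • X`, so `exp (-(iπ/2) • T s) = -i • T s`, and therefore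
`exp (-(iπ/2) • A) = (-i) ^ #S • T (∑ s ∈ S, s)`. For the hypercube `Q₃` the sum of the
connection set is `111`, so at time `π/2` every vertex is sent to its antipode up to a phase.
-/

open Matrix

open NormedSpace Nat in
theorem exp_smul_eq_cosh_add_sinh_of_mul_self_eq_one {𝔸 : Type*} [NormedRing 𝔸]
    [NormedAlgebra ℂ 𝔸] [CompleteSpace 𝔸] {X : 𝔸} (hX : X * X = 1) (c : ℂ) :
    exp (c • X) = Complex.cosh c • 1 + Complex.sinh c • X := by
  have hX2 : X ^ 2 = 1 := by rw [sq, hX]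
  have heven : HasSum (fun k => ((2 * k)! : ℂ)⁻¹ • (c • X) ^ (2 * k)) (Complex.cosh c • 1) := by
    refine ((Complex.hasSum_cosh c).smul_const (1 : 𝔸)).congr_fun fun k => ?_
    rw [smul_pow, pow_mul X, hX2, one_pow, smul_smul, div_eq_inv_mul]
  have hodd : HasSum (fun k => ((2 * k + 1)! : ℂ)⁻¹ • (c • X) ^ (2 * k + 1))
      (Complex.sinh c • X) := by
    refine ((Complex.hasSum_sinh c).smul_const X).congr_fun fun k => ?_
    rw [smul_pow, pow_succ X, pow_mul X, hX2, one_pow, one_mul, smul_smul, div_eq_inv_mul]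
  exact (exp_series_hasSum_exp' (𝕂 := ℂ) (c • X)).unique
    (HasSum.even_add_odd (f := fun n => (n ! : ℂ)⁻¹ • (c • X) ^ n) heven hodd)

section Translation

variable {G : Type*} [AddCommGroup G] [DecidableEq G]

def translationMatrix (R : Type*) [Zero R] [One R] (a : G) : Matrix G G R :=
  of fun u v => if v = u + a then 1 else 0

variable {R : Type*} [Semiring R]

theorem translationMatrix_apply (a u v : G) :
    translationMatrix R a u v = if v = u + a then 1 else 0 := rfl

theorem translationMatrix_zero : translationMatrix R (0 : G) = 1 := by
  ext u v
  simp [translationMatrix_apply, one_apply, eq_comm]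

theorem of_indicator_add_mem_eq_sum_translationMatrix (hG : ∀ x : G, x + x = 0)
    (S : Finset G) :
    (of fun u v => if u + v ∈ S then 1 else 0 : Matrix G G R) =
      ∑ s ∈ S, translationMatrix R s := by
  ext u v
  have hmem : ∀ s, v = u + s ↔ u + v = s := fun s => by
    constructor <;> rintro rfl <;> rw [← add_assoc, hG, zero_add]
  simp [translationMatrix_apply, Matrix.sum_apply, hmem]

variable [Fintype G]

theorem translationMatrix_mul (a b : G) :
    translationMatrix R a * translationMatrix R b = translationMatrix R (a + b) := by
  ext u w
  simp only [translationMatrix_apply, mul_apply, ite_mul, one_mul, zero_mul, Finset.sum_ite_eq',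
    Finset.mem_univ, if_true, add_assoc]

theorem translationMatrix_mul_self (hG : ∀ x : G, x + x = 0) (a : G) :
    translationMatrix R a * translationMatrix R a = 1 := by
  rw [translationMatrix_mul, hG, translationMatrix_zero]

theorem commute_translationMatrix (a b : G) :
    Commute (translationMatrix R a) (translationMatrix R b) := by
  rw [Commute, SemiconjBy, translationMatrix_mul, translationMatrix_mul, add_comm]

open NormedSpace

theorem exp_smul_translationMatrix (hG : ∀ x : G, x + x = 0) (a : G) (c : ℂ) :
    exp (c • translationMatrix ℂ a) =
      Complex.cosh c • 1 + Complex.sinh c • translationMatrix ℂ a :=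
  open scoped Matrix.Norms.Operator in
    exp_smul_eq_cosh_add_sinh_of_mul_self_eq_one (translationMatrix_mul_self hG a) c

theorem exp_neg_I_pi_div_two_smul_translationMatrix (hG : ∀ x : G, x + x = 0) (a : G) :
    exp ((-(Complex.I * (Real.pi / 2))) • translationMatrix ℂ a) =
      -Complex.I • translationMatrix ℂ a := by
  rw [exp_smul_translationMatrix hG, Complex.cosh_neg, Complex.sinh_neg, mul_comm,
    Complex.cosh_mul_I, Complex.sinh_mul_I, Complex.cos_pi_div_two, Complex.sin_pi_div_two]
  simp

open Finset in
theorem exp_neg_I_pi_div_two_smul_sum_translationMatrix (hG : ∀ x : G, x + x = 0)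
    (S : Finset G) :
    exp ((-(Complex.I * (Real.pi / 2))) • ∑ s ∈ S, translationMatrix ℂ s) =
      (-Complex.I) ^ #S • translationMatrix ℂ (∑ s ∈ S, s) := by
  induction S using Finset.induction_on with
  | empty => simp [translationMatrix_zero]
  | insert a S ha ih =>
    have hcomm : Commute (-(Complex.I * (Real.pi / 2)) • translationMatrix ℂ a)
        (-(Complex.I * (Real.pi / 2)) • ∑ s ∈ S, translationMatrix ℂ s) :=
      ((Commute.sum_right _ _ _ fun s _ => commute_translationMatrix a s).smul_left _).smul_right _
    rw [sum_insert ha, smul_add, Matrix.exp_add_of_commute _ _ hcomm, ih,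
      exp_neg_I_pi_div_two_smul_translationMatrix hG, smul_mul_smul_comm, translationMatrix_mul,
      sum_insert ha, card_insert_of_notMem ha, pow_succ']

end Translation

theorem hypercube_Q3_antipodal_pst
    (f : (Fin 3 → ZMod 2) → ℤ)
    (hf : ∀ y, f y = if y = ![0,0,1] ∨ y = ![0,1,0] ∨ y = ![1,0,0] then 1 else 0)
    (A : Matrix (Fin 3 → ZMod 2) (Fin 3 → ZMod 2) ℂ)
    (hA : ∀ u v, A u v = (f (u + v) : ℂ)) :
    ∀ u v : Fin 3 → ZMod 2, u + v = ![1,1,1] →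
      ‖NormedSpace.exp ((-(Complex.I * (Real.pi / 2))) • A) v u‖ = 1 := by
  intro u v huv
  have hG : ∀ x : Fin 3 → ZMod 2, x + x = 0 := by decide
  set S : Finset (Fin 3 → ZMod 2) := {![0,0,1], ![0,1,0], ![1,0,0]}
  have hA_sum : A = ∑ s ∈ S, translationMatrix ℂ s := by
    rw [← of_indicator_add_mem_eq_sum_translationMatrix hG]
    ext x y
    simp [hA, hf, S]
  have hS : S.card = 3 ∧ ∑ s ∈ S, s = ![1,1,1] := by decide
  have hvu : u = v + ![1,1,1] := by rw [← huv, add_comm u, ← add_assoc, hG, zero_add]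
  rw [hA_sum, exp_neg_I_pi_div_two_smul_sum_translationMatrix hG, hS.1, hS.2,
    Matrix.smul_apply, translationMatrix_apply, if_pos hvu]
  simp
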